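/- arXiv:2112.10158 — 2 statements merged into one kernel-verified Lean document; each statement's English description precedes it below -/
import Mathlib

section
/- Let $a : [0, T] \to [0, \infty)$ be continuous with $a(0) \leq m$, where $m, \delta > 0$. Let $s_0 > 0$ be the unique solution of $\frac{1}{m(1+\delta)s^{\delta}} - s + m = 0$ and set $\varepsilon_0 = \frac{1}{m(1+\delta) e^{m s_0^{1+\delta}} s_0^{\delta}}$. If $a(\tau) < \varepsilon_0 e^{m a(\tau)^{1+\delta}} + m$ for every $\tau \in [0,T]$, then $a(\tau) < s_0$ for every $\tau \in [0,T]$. -/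
open Real Set

theorem stmt3 (T m δ s₀ : ℝ) (a : ℝ → ℝ)
    (hT : 0 < T) (hm : 0 < m) (hδ : 0 < δ)
    (ha_cont : ContinuousOn a (Icc 0 T))
    (ha_nonneg : ∀ τ ∈ Icc 0 T, 0 ≤ a τ)
    (ha0 : a 0 ≤ m)
    (hs₀_pos : 0 < s₀)
    (hs₀ : 1 / (m * (1 + δ) * s₀ ^ δ) - s₀ + m = 0)
    (hs₀_uniq : ∀ s : ℝ, 0 < s → 1 / (m * (1 + δ) * s ^ δ) - s + m = 0 → s = s₀)
    (ε₀ : ℝ)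
    (hε₀ : ε₀ = 1 / (m * (1 + δ) * Real.exp (m * s₀ ^ (1 + δ)) * s₀ ^ δ))
    (hbound : ∀ τ ∈ Icc 0 T, a τ < ε₀ * Real.exp (m * a τ ^ (1 + δ)) + m) :
    ∀ τ ∈ Icc 0 T, a τ < s₀ := by
  have hsδ : (0:ℝ) < s₀ ^ δ := Real.rpow_pos_of_pos hs₀_pos δ
  have hden : (0:ℝ) < m * (1 + δ) * s₀ ^ δ := by positivity
  have hms₀ : m < s₀ := by
    have : s₀ = 1 / (m * (1 + δ) * s₀ ^ δ) + m := by linarith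
    have h1 : 0 < 1 / (m * (1 + δ) * s₀ ^ δ) := by positivity
    linarith
  -- key: ε₀ * exp(m s₀^{1+δ}) = 1/(m(1+δ)s₀^δ)
  have hexp : (0:ℝ) < Real.exp (m * s₀ ^ (1 + δ)) := Real.exp_pos _
  have hkey : ε₀ * Real.exp (m * s₀ ^ (1 + δ)) = 1 / (m * (1 + δ) * s₀ ^ δ) := by
    rw [hε₀]; field_simp
  have hne : ∀ σ ∈ Icc 0 T, a σ ≠ s₀ := by
    intro σ hσ heq
    have hb := hbound σ hσ
    rw [heq] at hb
    rw [hkey] at hb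
    linarith
  intro τ hτ
  by_contra hge
  push_neg at hge
  have hgt : s₀ < a τ := lt_of_le_of_ne hge (fun h => hne τ hτ h.symm)
  have hτ0 : (0:ℝ) ≤ τ := hτ.1
  have hsub : Icc (0:ℝ) τ ⊆ Icc 0 T := Icc_subset_Icc le_rfl hτ.2
  have hcont' : ContinuousOn a (Icc 0 τ) := ha_cont.mono hsub
  have h0m : a 0 ≤ s₀ := le_of_lt (lt_of_le_of_lt ha0 hms₀)
  have := intermediate_value_Icc hτ0 hcont'
  have hmem : s₀ ∈ a '' Icc 0 τ := this ⟨h0m, le_of_lt hgt⟩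
  obtain ⟨σ, hσ, hσeq⟩ := hmem
  exact hne σ (hsub hσ) hσeq
end

section
/- Let $0 < \tau < 1$ and set $\theta_\tau(s) = \min(s, 1/\tau)$ for $s \geq 0$. Let $k \geq 1$ and $k_n = k - k/2^{n+1}$. Then for every $C \geq 0$ and every $n \geq 0$, $\big[(C - k_n)^+\big]^{3/2} \geq \frac{1}{2^{(n+2)/2}} \sqrt{\theta_\tau(C)}\,(C - k_{n+1})^+$, where $x^+ = \max(x, 0)$. -/
open Real

theorem stmt9 (τ k : ℝ) (hτ : 0 < τ) (hτ1 : τ < 1) (hk : 1 ≤ k)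
    (kseq : ℕ → ℝ) (hkseq : ∀ n, kseq n = k - k / 2 ^ (n + 1))
    (θ : ℝ → ℝ) (hθ : ∀ s, θ s = min s (1 / τ)) :
    ∀ C : ℝ, 0 ≤ C → ∀ n : ℕ,
      (1 / 2 ^ ((n + 2 : ℝ) / 2)) * Real.sqrt (θ C) * max (C - kseq (n + 1)) 0 ≤
        (max (C - kseq n) 0) ^ ((3 : ℝ) / 2) := by
  intro C hC n
  have hk0 : (0:ℝ) ≤ k := by linarith
  have h2n2 : (0:ℝ) < 2 ^ (n + 2) := by positivity
  set a : ℝ := 1 / 2 ^ (n + 2) with ha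
  have ha0 : 0 < a := by positivity
  have ha4 : a ≤ 1 / 4 := by
    rw [ha]
    have : (4:ℝ) ≤ 2 ^ (n + 2) := by
      calc (4:ℝ) = 2 ^ 2 := by norm_num
      _ ≤ 2 ^ (n + 2) := by
        apply pow_le_pow_right₀ (by norm_num)
        omega
    rw [div_le_div_iff₀ h2n2 (by norm_num)]
    linarith
  have h2a : 2 * a = 1 / 2 ^ (n + 1) := by
    rw [ha, pow_succ]
    field_simp
  have hkn : kseq n = k - k * (2 * a) := by
    rw [hkseq, h2a]; ring
  have hkn1 : kseq (n + 1) = k - k * a := by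
    rw [hkseq, ha]
    have : (2:ℝ) ^ (n + 1 + 1) = 2 ^ (n + 2) := by norm_num
    rw [this]; ring
  have hmono : kseq n ≤ kseq (n + 1) := by
    rw [hkn, hkn1]
    nlinarith
  have hθ0 : 0 ≤ θ C := by
    rw [hθ]
    exact le_min hC (by positivity)
  have hθC : θ C ≤ C := by rw [hθ]; exact min_le_left _ _
  rcases le_or_gt C (kseq (n + 1)) with h | h
  · rw [max_eq_right (by linarith : C - kseq (n+1) ≤ 0), mul_zero]
    positivity
  · -- C > kseq (n+1)
    have hDpos : 0 < C - kseq n := by linarith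
    have hMpos : 0 < C - kseq (n + 1) := by linarith
    rw [max_eq_left hDpos.le, max_eq_left hMpos.le]
    set D := C - kseq n with hD
    -- key: a * θ C ≤ D
    have hC' : k * (1 - a) < C := by rw [hkn1] at h; linarith
    have key2 : a * C ≤ D := by
      rw [hD, hkn]
      nlinarith [mul_nonneg (by linarith : (0:ℝ) ≤ 1 - a) (by linarith : (0:ℝ) ≤ C - k * (1 - a)),
        mul_nonneg (mul_nonneg hk0 ha0.le) ha0.le]
    have key : a * θ C ≤ D := by nlinarith
    -- rewrite the power factor as sqrt a
    have hpow : (1 : ℝ) / 2 ^ ((n + 2 : ℝ) / 2) = Real.sqrt a := by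
      rw [ha, Real.sqrt_div' 1 (by norm_num), Real.sqrt_one]
      congr 1
      rw [show ((n:ℝ) + 2) / 2 = ((n:ℝ) + 2) * (1/2) by ring,
        Real.rpow_mul (by norm_num : (0:ℝ) ≤ 2), ← Real.sqrt_eq_rpow]
      congr 1
      rw [← Real.rpow_natCast 2 (n + 2)]
      norm_num
    rw [hpow, ← Real.sqrt_mul ha0.le]
    have h1 : Real.sqrt (a * θ C) ≤ Real.sqrt D := Real.sqrt_le_sqrt key
    have h2 : C - kseq (n + 1) ≤ D := by rw [hD]; linarith
    calc Real.sqrt (a * θ C) * (C - kseq (n + 1)) ≤ Real.sqrt D * D := by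
          apply mul_le_mul h1 h2 hMpos.le (Real.sqrt_nonneg D)
      _ = D ^ ((3:ℝ)/2) := by
          rw [show (3:ℝ)/2 = 1 + 1/2 by ring, Real.rpow_add hDpos, Real.rpow_one,
            ← Real.sqrt_eq_rpow]
          ring
end
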